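/- arXiv:2501.10103 — 5 statements merged into one kernel-verified Lean document; each statement's English description precedes it below -/
import Mathlib

section
/- For all α in (0,1), the derivative with respect to α of the relative entropy D(P_α‖P) (in bits) equals (α−1) σ²_{3,α} · log₂ e, where σ²_{3,α} = Var_{P_α}(ln P(X)). -/
/-!
Write `Z(b) = ∑ P^b` and `L = ln P`. Since `ln (P_b / P) = (b - 1) L - ln Z(b)`, the relative
entropy in nats is `(b - 1) 𝔼_b[L] - ln Z(b)`. Differentiating `ln Z` gives `𝔼_b[L]`, and
differentiating `𝔼_b[L]` gives `Var_b(L)` (the usual exponential-family identities), so the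
two mean terms cancel and only `(b - 1) Var_b(L)` survives.
-/

open Finset Real

noncomputable section

namespace Tilted

variable {A : Type*} [Fintype A]

def relEntropy (Q P : A → ℝ) : ℝ := ∑ a, Q a * log (Q a / P a)

variable (P : A → ℝ)

def partition (b : ℝ) : ℝ := ∑ a, P a ^ b

def tilted (b : ℝ) (a : A) : ℝ := P a ^ b / partition P b

def mean (f : A → ℝ) (b : ℝ) : ℝ := ∑ a, tilted P b a * f a

def var (f : A → ℝ) (b : ℝ) : ℝ := ∑ a, tilted P b a * (f a - mean P f b) ^ 2

variable {P}

theorem partition_pos [Nonempty A] (hP : ∀ a, 0 < P a) (b : ℝ) : 0 < partition P b :=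
  sum_pos (fun a _ => rpow_pos_of_pos (hP a) b) univ_nonempty

theorem sum_tilted [Nonempty A] (hP : ∀ a, 0 < P a) (b : ℝ) : ∑ a, tilted P b a = 1 := by
  simp only [tilted, ← sum_div]
  exact div_self (partition_pos hP b).ne'

theorem mean_eq_div (f : A → ℝ) (b : ℝ) :
    mean P f b = (∑ a, P a ^ b * f a) / partition P b := by
  simp only [mean, tilted, div_mul_eq_mul_div, sum_div]

theorem var_eq_mean_sq_sub [Nonempty A] (hP : ∀ a, 0 < P a) (f : A → ℝ) (b : ℝ) :
    var P f b = mean P (fun a => f a ^ 2) b - mean P f b ^ 2 := by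
  have expand : ∀ a, tilted P b a * (f a - mean P f b) ^ 2
      = tilted P b a * f a ^ 2 - 2 * mean P f b * (tilted P b a * f a)
        + mean P f b ^ 2 * tilted P b a := fun a => by ring
  rw [var, sum_congr rfl fun a _ => expand a, sum_add_distrib, sum_sub_distrib, ← mul_sum,
    ← mul_sum, sum_tilted hP, ← mean, ← mean]
  ring

theorem hasDerivAt_sum_rpow_mul (hP : ∀ a, 0 < P a) (g : A → ℝ) (α : ℝ) :
    HasDerivAt (fun b => ∑ a, P a ^ b * g a) (∑ a, P a ^ α * (log (P a) * g a)) α := by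
  refine HasDerivAt.fun_sum fun a _ => ?_
  rw [← mul_assoc]
  exact (hasStrictDerivAt_const_rpow (hP a) α).hasDerivAt.mul_const (g a)

theorem hasDerivAt_partition (hP : ∀ a, 0 < P a) (α : ℝ) :
    HasDerivAt (partition P) (∑ a, P a ^ α * log (P a)) α := by
  have h := hasDerivAt_sum_rpow_mul hP (fun _ => 1) α
  simp only [mul_one] at h
  exact h

theorem hasDerivAt_log_partition [Nonempty A] (hP : ∀ a, 0 < P a) (α : ℝ) :
    HasDerivAt (fun b => log (partition P b)) (mean P (fun a => log (P a)) α) α := by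
  rw [mean_eq_div]
  exact (hasDerivAt_partition hP α).log (partition_pos hP α).ne'

theorem hasDerivAt_mean_log [Nonempty A] (hP : ∀ a, 0 < P a) (α : ℝ) :
    HasDerivAt (mean P fun a => log (P a)) (var P (fun a => log (P a)) α) α := by
  have hZ := (partition_pos hP α).ne'
  have hquot := (hasDerivAt_sum_rpow_mul hP (fun a => log (P a)) α).fun_div
    (hasDerivAt_partition hP α) hZ
  rw [show (mean P fun a => log (P a)) = fun b => (∑ a, P a ^ b * log (P a)) / partition P b
    from funext (mean_eq_div _)]
  refine hquot.congr_deriv ?_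
  rw [var_eq_mean_sq_sub hP, mean_eq_div, mean_eq_div]
  field_simp

theorem relEntropy_tilted [Nonempty A] (hP : ∀ a, 0 < P a) (b : ℝ) :
    relEntropy (tilted P b) P = (b - 1) * mean P (fun a => log (P a)) b - log (partition P b) := by
  have hZ := partition_pos hP b
  have hlog : ∀ a, log (tilted P b a / P a) = (b - 1) * log (P a) - log (partition P b) :=
    fun a => by
      have hPb := rpow_pos_of_pos (hP a) b
      rw [tilted, log_div (div_pos hPb hZ).ne' (hP a).ne', log_div hPb.ne' hZ.ne',
        log_rpow (hP a)]
      ring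
  simp only [relEntropy, hlog, mul_sub, sum_sub_distrib, ← sum_mul, sum_tilted hP, mean,
    mul_left_comm _ (b - 1), ← mul_sum]
  ring

theorem hasDerivAt_relEntropy_tilted [Nonempty A] (hP : ∀ a, 0 < P a) (α : ℝ) :
    HasDerivAt (fun b => relEntropy (tilted P b) P)
      ((α - 1) * var P (fun a => log (P a)) α) α := by
  simp only [relEntropy_tilted hP]
  refine ((((hasDerivAt_id α).sub_const 1).fun_mul (hasDerivAt_mean_log hP α)).fun_sub
    (hasDerivAt_log_partition hP α)).congr_deriv ?_
  simp only [id]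
  ring

end Tilted

end

theorem deriv_relative_entropy_tilted_general {A : Type*} [Fintype A] (P : A → ℝ)
    (hpos : ∀ a, 0 < P a) (hsum : ∑ a, P a = 1)
    (α : ℝ) :
    let Pa : ℝ → A → ℝ := fun b a => P a ^ b / ∑ y, P y ^ b
    let D : ℝ → ℝ := fun b => ∑ a, Pa b a * Real.logb 2 (Pa b a / P a)
    let m3 : ℝ := ∑ a, Pa α a * Real.log (P a)
    let σ3sq : ℝ := ∑ a, Pa α a * (Real.log (P a) - m3) ^ 2
    HasDerivAt D ((α - 1) * σ3sq * Real.logb 2 (Real.exp 1)) α := by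
  intro Pa D m3 σ3sq
  have : Nonempty A := univ_nonempty_iff.mp (nonempty_of_sum_ne_zero (hsum ▸ one_ne_zero))
  have hD : D = fun b => Tilted.relEntropy (Tilted.tilted P b) P / log 2 := by
    funext b
    simp only [D, Tilted.relEntropy, logb, sum_div, mul_div_assoc]
    rfl
  have hσ : σ3sq = Tilted.var P (fun a => log (P a)) α := rfl
  rw [hD, hσ, logb, log_exp, mul_one_div]
  exact (Tilted.hasDerivAt_relEntropy_tilted hpos α).div_const (log 2)

/-- The derivative in `α` of the relative entropy `D(P_α ‖ P)` (in bits)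
equals `(α - 1) σ²_{3,α} log₂ e`. -/
theorem deriv_relative_entropy_tilted {A : Type*} [Fintype A] (P : A → ℝ)
    (hpos : ∀ a, 0 < P a) (hsum : ∑ a, P a = 1)
    (α : ℝ) (hα : α ∈ Set.Ioo (0 : ℝ) 1) :
    let Pa : ℝ → A → ℝ := fun b a => P a ^ b / ∑ y, P y ^ b
    let D : ℝ → ℝ := fun b => ∑ a, Pa b a * Real.logb 2 (Pa b a / P a)
    let m3 : ℝ := ∑ a, Pa α a * Real.log (P a)
    let σ3sq : ℝ := ∑ a, Pa α a * (Real.log (P a) - m3) ^ 2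
    HasDerivAt D ((α - 1) * σ3sq * Real.logb 2 (Real.exp 1)) α :=
  deriv_relative_entropy_tilted_general P hpos hsum α
end

section
/- For all α in (0,1), the derivative with respect to α of the Shannon entropy H(P_α) (in bits) equals −α σ²_{3,α} · log₂ e, where σ²_{3,α} = Var_{P_α}(ln P(X)). -/
/-!
Since `P a ^ b = exp (b log P a)`, the family `P_b` is the exponential family with potential
`f = log P`, whose entropy in nats is `log Z(b) - b E_b[f]`. Differentiating,
`(log Z)' = E_b[f]` and `(E_b[f])' = Var_b(f)`, so the entropy has derivative `-b Var_b(f)`;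
dividing by `log 2` converts to bits.
-/

open Finset Real

section GibbsFamily

variable {A : Type*} [Fintype A] (f : A → ℝ)

noncomputable def partitionFunction (b : ℝ) : ℝ := ∑ a, exp (b * f a)

noncomputable def gibbs (b : ℝ) (a : A) : ℝ := exp (b * f a) / partitionFunction f b

noncomputable def gibbsMean (b : ℝ) : ℝ := ∑ a, gibbs f b a * f a

noncomputable def gibbsVariance (b : ℝ) : ℝ := ∑ a, gibbs f b a * (f a - gibbsMean f b) ^ 2

theorem partitionFunction_pos [Nonempty A] (b : ℝ) : 0 < partitionFunction f b :=
  sum_pos (fun _ _ => exp_pos _) univ_nonempty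

theorem sum_gibbs_mul (b : ℝ) (g : A → ℝ) :
    ∑ a, gibbs f b a * g a = (∑ a, exp (b * f a) * g a) / partitionFunction f b := by
  rw [sum_div]
  exact sum_congr rfl fun a _ => div_mul_eq_mul_div _ _ _

theorem sum_gibbs [Nonempty A] (b : ℝ) : ∑ a, gibbs f b a = 1 := by
  simp only [gibbs, ← sum_div]
  exact div_self (partitionFunction_pos f b).ne'

theorem gibbsVariance_eq [Nonempty A] (b : ℝ) :
    gibbsVariance f b = ∑ a, gibbs f b a * f a ^ 2 - gibbsMean f b ^ 2 := by
  have expand : ∀ a, gibbs f b a * (f a - gibbsMean f b) ^ 2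
      = gibbs f b a * f a ^ 2 - 2 * gibbsMean f b * (gibbs f b a * f a)
        + gibbsMean f b ^ 2 * gibbs f b a := fun a => by ring
  rw [gibbsVariance, sum_congr rfl fun a _ => expand a, sum_add_distrib, sum_sub_distrib,
    ← mul_sum, ← mul_sum, sum_gibbs, ← gibbsMean]
  ring

theorem gibbs_entropy_eq [Nonempty A] (b : ℝ) :
    -∑ a, gibbs f b a * log (gibbs f b a) = log (partitionFunction f b) - b * gibbsMean f b := by
  have hlog : ∀ a, log (gibbs f b a) = b * f a - log (partitionFunction f b) := fun a => by
    rw [gibbs, log_div (exp_pos _).ne' (partitionFunction_pos f b).ne', log_exp]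
  have hmean : ∑ a, gibbs f b a * (b * f a) = b * gibbsMean f b := by
    rw [gibbsMean, mul_sum]
    exact sum_congr rfl fun a _ => by ring
  simp only [hlog, mul_sub, sum_sub_distrib, ← sum_mul, sum_gibbs, hmean]
  ring

theorem hasDerivAt_sum_exp_mul (g : A → ℝ) (b : ℝ) :
    HasDerivAt (fun b => ∑ a, exp (b * f a) * g a) (∑ a, exp (b * f a) * (f a * g a)) b := by
  refine HasDerivAt.fun_sum fun a _ => ?_
  exact ((((hasDerivAt_id' b).mul_const (f a)).exp).mul_const (g a)).congr_deriv (by ring)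

theorem hasDerivAt_partitionFunction (b : ℝ) :
    HasDerivAt (partitionFunction f) (∑ a, exp (b * f a) * f a) b := by
  have h := hasDerivAt_sum_exp_mul f (fun _ => 1) b
  simp only [mul_one] at h
  exact h

theorem hasDerivAt_log_partitionFunction [Nonempty A] (b : ℝ) :
    HasDerivAt (fun b => log (partitionFunction f b)) (gibbsMean f b) b := by
  rw [gibbsMean, sum_gibbs_mul]
  exact (hasDerivAt_partitionFunction f b).log (partitionFunction_pos f b).ne'

theorem hasDerivAt_gibbsMean [Nonempty A] (b : ℝ) :
    HasDerivAt (gibbsMean f) (gibbsVariance f b) b := by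
  have hZ := (partitionFunction_pos f b).ne'
  rw [show gibbsMean f = _ from funext fun b => sum_gibbs_mul f b f]
  refine ((hasDerivAt_sum_exp_mul f f b).div (hasDerivAt_partitionFunction f b) hZ).congr_deriv ?_
  rw [gibbsVariance_eq, sum_gibbs_mul, gibbsMean, sum_gibbs_mul]
  field_simp

theorem hasDerivAt_gibbs_entropy (b : ℝ) :
    HasDerivAt (fun b => -∑ a, gibbs f b a * log (gibbs f b a)) (-(b * gibbsVariance f b)) b := by
  rcases isEmpty_or_nonempty A with hA | hA
  · simpa [gibbsVariance] using hasDerivAt_const b (0 : ℝ)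
  rw [funext (gibbs_entropy_eq f)]
  exact ((hasDerivAt_log_partitionFunction f b).sub
    ((hasDerivAt_id' b).mul (hasDerivAt_gibbsMean f b))).congr_deriv (by ring)

end GibbsFamily

theorem deriv_entropy_tilted_general {A : Type*} [Fintype A] (P : A → ℝ)
    (hpos : ∀ a, 0 < P a)
    (α : ℝ) :
    let Pa : ℝ → A → ℝ := fun b a => P a ^ b / ∑ y, P y ^ b
    let H : ℝ → ℝ := fun b => -∑ a, Pa b a * Real.logb 2 (Pa b a)
    let m3 : ℝ := ∑ a, Pa α a * Real.log (P a)
    let σ3sq : ℝ := ∑ a, Pa α a * (Real.log (P a) - m3) ^ 2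
    HasDerivAt H (-(α * σ3sq) * Real.logb 2 (Real.exp 1)) α := by
  intro Pa H m3 σ3sq
  have hPa : Pa = gibbs (fun a => log (P a)) := by
    funext b a
    simp only [Pa, gibbs, partitionFunction, rpow_def_of_pos (hpos _), mul_comm b]
  have hH : H = fun b => (-∑ a, Pa b a * log (Pa b a)) / log 2 := by
    funext b
    simp only [H, logb, neg_div, sum_div, mul_div_assoc]
  have hσ : σ3sq = gibbsVariance (fun a => log (P a)) α := by
    simp only [σ3sq, m3, hPa, gibbsVariance, gibbsMean]
  rw [hH, hσ, logb, log_exp, mul_one_div, hPa]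
  exact (hasDerivAt_gibbs_entropy _ α).div_const _

/-- The derivative in `α` of the Shannon entropy `H(P_α)` (in bits)
equals `-α σ²_{3,α} log₂ e`. -/
theorem deriv_entropy_tilted {A : Type*} [Fintype A] (P : A → ℝ)
    (hpos : ∀ a, 0 < P a) (hsum : ∑ a, P a = 1)
    (α : ℝ) (hα : α ∈ Set.Ioo (0 : ℝ) 1) :
    let Pa : ℝ → A → ℝ := fun b a => P a ^ b / ∑ y, P y ^ b
    let H : ℝ → ℝ := fun b => -∑ a, Pa b a * Real.logb 2 (Pa b a)
    let m3 : ℝ := ∑ a, Pa α a * Real.log (P a)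
    let σ3sq : ℝ := ∑ a, Pa α a * (Real.log (P a) - m3) ^ 2
    HasDerivAt H (-(α * σ3sq) * Real.logb 2 (Real.exp 1)) α :=
  deriv_entropy_tilted_general P hpos α
end

section
/- For all α ∈ (0,1) and any pair of p.m.f.s P, Q on a finite alphabet A with P of full support: α·[D(Q‖P) − D(P_α‖P)] = D(Q‖P_α) + (1−α)·[H(Q) − H(P_α)]. -/
open Finset

lemma split_log_term (q x : ℝ) (hq : 0 ≤ q) (hx : 0 < x) :
    q * Real.logb 2 (q / x) = q * Real.logb 2 q - q * Real.logb 2 x := by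
  rcases eq_or_lt_of_le hq with h | h
  · simp [← h]
  · rw [Real.logb_div h.ne' hx.ne', mul_sub]

/-- For all `α ∈ (0,1)` and p.m.f.s `P, Q` with `P` of full support:
`α [D(Q‖P) - D(P_α‖P)] = D(Q‖P_α) + (1-α)[H(Q) - H(P_α)]`. -/
theorem tilted_relative_entropy_identity {A : Type*} [Fintype A] (P Q : A → ℝ)
    (hpos : ∀ a, 0 < P a) (hsum : ∑ a, P a = 1)
    (hQnonneg : ∀ a, 0 ≤ Q a) (hQsum : ∑ a, Q a = 1)
    (α : ℝ) (hα : α ∈ Set.Ioo (0 : ℝ) 1) :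
    let Z : ℝ := ∑ a, P a ^ α
    let Pa : A → ℝ := fun a => P a ^ α / Z
    let DQP : ℝ := ∑ a, Q a * Real.logb 2 (Q a / P a)
    let DaP : ℝ := ∑ a, Pa a * Real.logb 2 (Pa a / P a)
    let DQa : ℝ := ∑ a, Q a * Real.logb 2 (Q a / Pa a)
    let HQ : ℝ := -∑ a, Q a * Real.logb 2 (Q a)
    let Ha : ℝ := -∑ a, Pa a * Real.logb 2 (Pa a)
    α * (DQP - DaP) = DQa + (1 - α) * (HQ - Ha) := by
  intro Z Pa DQP DaP DQa HQ Ha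
  obtain ⟨hα0, hα1⟩ := hα
  have hne : (Finset.univ : Finset A).Nonempty := by
    by_contra h
    rw [Finset.not_nonempty_iff_eq_empty] at h
    rw [h] at hsum
    simp at hsum
  have hZ : 0 < Z := Finset.sum_pos (fun a _ => Real.rpow_pos_of_pos (hpos a) α) hne
  have hPa : ∀ a, 0 < Pa a := fun a => div_pos (Real.rpow_pos_of_pos (hpos a) α) hZ
  have hPasum : ∑ a, Pa a = 1 := by
    simp only [Pa]
    rw [← Finset.sum_div, div_self hZ.ne']
  have logPa : ∀ a, Real.logb 2 (Pa a) = α * Real.logb 2 (P a) - Real.logb 2 Z := by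
    intro a
    simp only [Pa]
    rw [Real.logb_div (Real.rpow_pos_of_pos (hpos a) α).ne' hZ.ne']
    unfold Real.logb
    rw [Real.log_rpow (hpos a)]
    ring
  have hDQP : DQP = (∑ a, Q a * Real.logb 2 (Q a)) - ∑ a, Q a * Real.logb 2 (P a) := by
    simp only [DQP]
    rw [← Finset.sum_sub_distrib]
    exact Finset.sum_congr rfl fun a _ => split_log_term _ _ (hQnonneg a) (hpos a)
  have hDaP : DaP = (∑ a, Pa a * Real.logb 2 (Pa a)) - ∑ a, Pa a * Real.logb 2 (P a) := by
    simp only [DaP]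
    rw [← Finset.sum_sub_distrib]
    exact Finset.sum_congr rfl fun a _ => split_log_term _ _ (hPa a).le (hpos a)
  have hDQa : DQa = (∑ a, Q a * Real.logb 2 (Q a)) - ∑ a, Q a * Real.logb 2 (Pa a) := by
    simp only [DQa]
    rw [← Finset.sum_sub_distrib]
    exact Finset.sum_congr rfl fun a _ => split_log_term _ _ (hQnonneg a) (hPa a)
  have e1 : ∑ a, Q a * Real.logb 2 (Pa a)
      = α * (∑ a, Q a * Real.logb 2 (P a)) - Real.logb 2 Z := by
    simp only [logPa, mul_sub, Finset.sum_sub_distrib]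
    rw [← Finset.sum_mul, hQsum, one_mul, Finset.mul_sum]
    congr 1
    exact Finset.sum_congr rfl fun a _ => by ring
  have e2 : ∑ a, Pa a * Real.logb 2 (Pa a)
      = α * (∑ a, Pa a * Real.logb 2 (P a)) - Real.logb 2 Z := by
    simp only [logPa, mul_sub, Finset.sum_sub_distrib]
    rw [← Finset.sum_mul, hPasum, one_mul, Finset.mul_sum]
    congr 1
    exact Finset.sum_congr rfl fun a _ => by ring
  simp only [HQ, Ha]
  rw [hDQP, hDaP, hDQa]
  linear_combination e1 - e2
end

section
/- Let f* be an optimal (one-to-one) compressor for a finite-valued random variable X, i.e. the injection into binary strings minimizing P(ℓ(f(X)) ≥ t) simultaneously for all t (attained by ordering outcomes by decreasing probability). Then for any k > 0 and τ > 0: P[ℓ(f*(X)) ≥ k−1] > P[−log₂ P(X) ≥ k + τ] − 2^{−τ}. -/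
/-!
An outcome with `-log₂ P(a) ≥ k + τ` has probability at most `2^{-(k+τ)}`, and an injective
compressor has fewer than `2^k` codewords of length `< k - 1`. So the part of the event
`{-log₂ P(X) ≥ k + τ}` on which the codeword is short has mass `< 2^k · 2^{-(k+τ)} = 2^{-τ}`,
and the rest of it lies in `{ℓ(f(X)) ≥ k - 1}`.
-/

open Finset

theorem card_lt_two_pow_of_forall_length_lt {S : Finset (List Bool)} {n : ℕ}
    (hS : ∀ l ∈ S, l.length < n) : #S < 2 ^ n :=
  calc #S = ∑ m ∈ range n, #{l ∈ S | l.length = m} :=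
        card_eq_sum_card_fiberwise fun l hl => mem_range.2 (hS l hl)
    _ ≤ ∑ m ∈ range n, 2 ^ m :=
        sum_le_sum fun m _ => by simpa using card_filter_length_eq_le (T := S) (s := m)
    _ < 2 ^ n := Nat.geomSum_lt le_rfl fun m hm => mem_range.1 hm

theorem card_filter_length_lt_sub_one_lt_two_rpow {A : Type*} [Fintype A] {f : A → List Bool}
    (hf : Function.Injective f) {k : ℝ} (hk : 0 ≤ k) :
    (#{a | ((f a).length : ℝ) < k - 1} : ℝ) < 2 ^ k := by
  classical
  have hlen : ∀ l ∈ image f {a | ((f a).length : ℝ) < k - 1}, l.length < ⌊k⌋₊ := by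
    simp only [mem_image, mem_filter, mem_univ, true_and, forall_exists_index, and_imp]
    rintro _ a ha rfl
    exact Nat.lt_of_lt_of_le (Nat.lt_succ_self _) (Nat.le_floor (by push_cast; linarith))
  calc (#{a | ((f a).length : ℝ) < k - 1} : ℝ) < (2 ^ ⌊k⌋₊ : ℕ) := by
        rw [← card_image_of_injective _ hf]
        exact_mod_cast card_lt_two_pow_of_forall_length_lt hlen
    _ ≤ 2 ^ k := by
        rw [Nat.cast_pow, Nat.cast_ofNat, ← Real.rpow_natCast]
        exact Real.rpow_le_rpow_of_exponent_le one_le_two (Nat.floor_le hk)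

theorem le_two_rpow_neg_of_le_neg_logb {p x : ℝ} (hp : 0 ≤ p) (h : x ≤ -Real.logb 2 p) :
    p ≤ 2 ^ (-x) := by
  rcases hp.eq_or_lt with rfl | hp
  · positivity
  · calc p = 2 ^ Real.logb 2 p := (Real.rpow_logb two_pos (by norm_num) hp).symm
      _ ≤ 2 ^ (-x) := Real.rpow_le_rpow_of_exponent_le one_le_two (by linarith)

theorem sum_filter_le_neg_logb_le_card_mul {A : Type*} (s : Finset A) {P : A → ℝ}
    (hP : ∀ a, 0 ≤ P a) (x : ℝ) :
    ∑ a ∈ s with x ≤ -Real.logb 2 (P a), P a ≤ #s * 2 ^ (-x) :=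
  calc ∑ a ∈ s with x ≤ -Real.logb 2 (P a), P a
      ≤ #{a ∈ s | x ≤ -Real.logb 2 (P a)} • (2 : ℝ) ^ (-x) :=
        sum_le_card_nsmul _ _ _ fun a ha =>
          le_two_rpow_neg_of_le_neg_logb (hP a) (mem_filter.1 ha).2
    _ ≤ #s * 2 ^ (-x) := by
        rw [nsmul_eq_mul]; gcongr; exact filter_subset _ s

theorem one_shot_converse_general {A : Type*} [Fintype A]
    (P : A → ℝ) (hnonneg : ∀ a, 0 ≤ P a)
    (f : A → List Bool) (hinj : Function.Injective f)
    (k τ : ℝ) (hk : 0 < k) :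
    ∑ a ∈ univ.filter (fun a => k - 1 ≤ ((f a).length : ℝ)), P a >
      (∑ a ∈ univ.filter (fun a => k + τ ≤ -Real.logb 2 (P a)), P a)
        - (2 : ℝ) ^ (-τ) := by
  set long := fun a : A => k - 1 ≤ ((f a).length : ℝ)
  set unlikely := fun a : A => k + τ ≤ -Real.logb 2 (P a)
  have hsplit := sum_filter_add_sum_filter_not (univ.filter unlikely) long P
  have hlong : ∑ a ∈ univ.filter unlikely with long a, P a ≤ ∑ a with long a, P a :=
    sum_le_sum_of_subset_of_nonneg (monotone_filter_left _ (subset_univ _))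
      fun a _ _ => hnonneg a
  have hshort : ∑ a ∈ univ.filter unlikely with ¬ long a, P a < 2 ^ (-τ) := by
    rw [filter_comm]
    calc _ ≤ #{a | ¬ long a} * (2 : ℝ) ^ (-(k + τ)) :=
          sum_filter_le_neg_logb_le_card_mul _ hnonneg _
      _ < 2 ^ k * 2 ^ (-(k + τ)) := by
          gcongr
          simpa only [long, not_le] using card_filter_length_lt_sub_one_lt_two_rpow hinj hk.le
      _ = 2 ^ (-τ) := by rw [← Real.rpow_add two_pos]; ring_nf
  linarith

/-- One-shot converse for optimal one-to-one compression: if `f` is an optimal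
injective compressor of `X ~ P` (minimizing `P(ℓ(f(X)) ≥ t)` for every
threshold `t`), then for all `k > 0`, `τ > 0`,
`P[ℓ(f(X)) ≥ k - 1] > P[-log₂ P(X) ≥ k + τ] - 2^{-τ}`. -/
theorem one_shot_converse {A : Type*} [Fintype A] [DecidableEq A]
    (P : A → ℝ) (hnonneg : ∀ a, 0 ≤ P a) (hsum : ∑ a, P a = 1)
    (f : A → List Bool) (hinj : Function.Injective f)
    (hopt : ∀ g : A → List Bool, Function.Injective g → ∀ t : ℝ,
      ∑ a ∈ univ.filter (fun a => t ≤ ((f a).length : ℝ)), P a ≤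
        ∑ a ∈ univ.filter (fun a => t ≤ ((g a).length : ℝ)), P a)
    (k τ : ℝ) (hk : 0 < k) (hτ : 0 < τ) :
    ∑ a ∈ univ.filter (fun a => k - 1 ≤ ((f a).length : ℝ)), P a >
      (∑ a ∈ univ.filter (fun a => k + τ ≤ -Real.logb 2 (P a)), P a)
        - (2 : ℝ) ^ (-τ) :=
  one_shot_converse_general P hnonneg f hinj k τ hk
end

section
/- Let P be an n-type with full support on an alphabet of size k (i.e., nP(a) is a positive integer for each a). Then the size of the type class satisfies |T(P)| ≍_k (2^{nH(P)} / n^{(k−1)/2}) · Π_{a} P(a)^{−1/2}, i.e., there exist constants c(k), C(k) > 0 depending only on k such that c(k)·(2^{nH(P)}/n^{(k−1)/2})·Π_a P(a)^{−1/2} ≤ |T(P)| ≤ C(k)·(2^{nH(P)}/n^{(k−1)/2})·Π_a P(a)^{−1/2}. -/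
/-!
Permutations of positions act on sequences `Fin n → Fin k`; the orbit of a sequence is its type
class and its stabilizer is the product of the symmetric groups of the fibres, so
`|T(P)| = n! / ∏ₐ (nP(a))!`. Stirling's formula in the uniform form
`√π ≤ j! / (√(2j) (j/e)^j) ≤ e/√2` for `j ≥ 1` reduces the estimate to the exact identity
`√(2n) (n/e)^n / ∏ₐ √(2nP(a)) (nP(a)/e)^{nP(a)} = 2^{(1-k)/2} 2^{nH(P)} n^{-(k-1)/2} ∏ₐ P(a)^{-1/2}`,
in which the powers of `e` cancel because `∑ₐ nP(a) = n`, and `∏ₐ P(a)^{-nP(a)} = 2^{nH(P)}`.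
-/

open Finset Real Nat Stirling

section FiberCount

open Equiv MulAction

variable {α ι : Type*}

lemma card_fiber_comp_perm [Fintype α] [DecidableEq ι] (x : α → ι) (g : Perm α) (i : ι) :
    #{a | x (g a) = i} = #{a | x a = i} := by
  simp only [← Fintype.card_subtype]
  exact Fintype.card_congr (g.subtypeEquiv fun _ ↦ Iff.rfl)

lemma mem_orbit_domMulAct_iff [Fintype α] [DecidableEq ι] {x y : α → ι} :
    y ∈ orbit (Perm α)ᵈᵐᵃ x ↔ ∀ i, #{a | y a = i} = #{a | x a = i} := by
  constructor
  · rintro ⟨g, rfl⟩ i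
    exact card_fiber_comp_perm x _ i
  · intro h
    have e : ∀ i, {a // y a = i} ≃ {a // x a = i} := fun i ↦
      Fintype.equivOfCardEq (by simpa only [Fintype.card_subtype] using h i)
    exact ⟨DomMulAct.mk (ofFiberEquiv e), funext (ofFiberEquiv_map e)⟩

lemma exists_card_fiber_eq [Fintype α] [Fintype ι] [DecidableEq ι] {m : ι → ℕ}
    (hm : ∑ i, m i = Fintype.card α) :
    ∃ x : α → ι, ∀ i, #{a | x a = i} = m i := by
  let e : α ≃ Σ i, Fin (m i) := Fintype.equivOfCardEq (by simp [hm])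
  refine ⟨fun a ↦ (e a).1, fun i ↦ ?_⟩
  rw [← Fintype.card_subtype, Fintype.card_congr ((e.subtypeEquiv fun _ ↦ Iff.rfl).trans
    (sigmaSubtype i)), Fintype.card_fin]

theorem card_filter_card_fiber_eq [Fintype α] [DecidableEq α] [Fintype ι] [DecidableEq ι]
    {m : ι → ℕ} (hm : ∑ i, m i = Fintype.card α) :
    #{x : α → ι | ∀ i, #{a | x a = i} = m i} = Nat.multinomial univ m := by
  obtain ⟨x, hx⟩ := exists_card_fiber_eq hm
  have horbit : (orbit (Perm α)ᵈᵐᵃ x).ncard = #{y : α → ι | ∀ i, #{a | y a = i} = m i} := by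
    rw [← Set.ncard_coe_finset]
    congr 1
    ext y
    simp [mem_orbit_domMulAct_iff, hx]
  have hstab : Nat.card (stabilizer (Perm α)ᵈᵐᵃ x) = ∏ i, (m i)! := by
    rw [Nat.card_congr (subtypeEquiv (q := fun g : Perm α ↦ x ∘ g = x) DomMulAct.mk.symm
        fun _ ↦ DomMulAct.mem_stabilizer_iff),
      Nat.card_eq_fintype_card, DomMulAct.stabilizer_card]
    simp only [Fintype.card_subtype, hx]
  have horbit_stab : Nat.card (stabilizer (Perm α)ᵈᵐᵃ x) * (orbit (Perm α)ᵈᵐᵃ x).ncard =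
      (Fintype.card α)! := by
    rw [← index_stabilizer, Subgroup.card_mul_index, Nat.card_congr DomMulAct.mk.symm,
      Nat.card_perm, Nat.card_eq_fintype_card]
  rw [hstab, horbit, ← hm, ← Nat.multinomial_spec] at horbit_stab
  exact Nat.eq_of_mul_eq_mul_left (prod_pos fun i _ ↦ factorial_pos _) horbit_stab

end FiberCount

/-- Mathlib's `stirlingSeq n` is `n ! / stirlingApprox n`, and it tends to `√π`. -/
noncomputable def stirlingApprox (n : ℕ) : ℝ := √(2 * n) * (n / exp 1) ^ n

lemma factorial_eq_stirlingSeq_mul_stirlingApprox {n : ℕ} (hn : n ≠ 0) :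
    (n ! : ℝ) = stirlingSeq n * stirlingApprox n := by
  have : 0 < stirlingApprox n := by unfold stirlingApprox; positivity
  exact (div_mul_cancel₀ _ this.ne').symm

lemma stirlingSeq_pos {n : ℕ} (hn : n ≠ 0) : 0 < stirlingSeq n :=
  (sqrt_pos.2 pi_pos).trans_le (sqrt_pi_le_stirlingSeq hn)

lemma stirlingSeq_le_stirlingSeq_one {n : ℕ} (hn : n ≠ 0) : stirlingSeq n ≤ stirlingSeq 1 := by
  obtain ⟨n, rfl⟩ := exists_eq_succ_of_ne_zero hn
  exact stirlingSeq'_antitone (Nat.zero_le n)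

section Multinomial

variable {ι : Type*} [Fintype ι]

lemma multinomial_eq_stirlingSeq_mul_stirlingApprox {m : ι → ℕ} {n : ℕ} (hm : ∀ i, m i ≠ 0)
    (hn : n ≠ 0) (hsum : ∑ i, m i = n) :
    (multinomial univ m : ℝ) = stirlingSeq n / (∏ i, stirlingSeq (m i)) *
      (stirlingApprox n / ∏ i, stirlingApprox (m i)) := by
  have hspec : (∏ i, ((m i)! : ℝ)) * multinomial univ m = n ! := by
    exact_mod_cast hsum ▸ multinomial_spec univ m
  have hprod : ∏ i, ((m i)! : ℝ) = (∏ i, stirlingSeq (m i)) * ∏ i, stirlingApprox (m i) := by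
    rw [← prod_mul_distrib]
    exact prod_congr rfl fun i _ ↦ factorial_eq_stirlingSeq_mul_stirlingApprox (hm i)
  have hpos : 0 < ∏ i, ((m i)! : ℝ) := prod_pos fun i _ ↦ by positivity
  rw [_root_.div_mul_div_comm, ← hprod, ← factorial_eq_stirlingSeq_mul_stirlingApprox hn,
    ← hspec, mul_div_cancel_left₀ _ hpos.ne']

lemma sqrt_pi_div_le_stirlingSeq_div_prod {m : ι → ℕ} {n : ℕ} (hm : ∀ i, m i ≠ 0)
    (hn : n ≠ 0) :
    √π / stirlingSeq 1 ^ Fintype.card ι ≤ stirlingSeq n / ∏ i, stirlingSeq (m i) := by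
  have hprod : ∏ i, stirlingSeq (m i) ≤ stirlingSeq 1 ^ Fintype.card ι := by
    rw [← Finset.card_univ, ← prod_const]
    exact prod_le_prod (fun i _ ↦ (stirlingSeq_pos (hm i)).le)
      fun i _ ↦ stirlingSeq_le_stirlingSeq_one (hm i)
  gcongr
  · exact (stirlingSeq_pos hn).le
  · exact prod_pos fun i _ ↦ stirlingSeq_pos (hm i)
  · exact sqrt_pi_le_stirlingSeq hn

lemma stirlingSeq_div_prod_le {m : ι → ℕ} {n : ℕ} (hm : ∀ i, m i ≠ 0) (hn : n ≠ 0) :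
    stirlingSeq n / ∏ i, stirlingSeq (m i) ≤ stirlingSeq 1 / √π ^ Fintype.card ι := by
  have hprod : √π ^ Fintype.card ι ≤ ∏ i, stirlingSeq (m i) := by
    rw [← Finset.card_univ, ← prod_const]
    exact prod_le_prod (fun i _ ↦ by positivity) fun i _ ↦ sqrt_pi_le_stirlingSeq (hm i)
  gcongr
  · exact (stirlingSeq_pos one_ne_zero).le
  · exact stirlingSeq_le_stirlingSeq_one hn

end Multinomial

section TypeClass

variable {ι : Type*} [Fintype ι] {P : ι → ℝ} {m : ι → ℕ} {n : ℕ}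

lemma exists_counts_of_type (hn : n ≠ 0) (hP : ∀ i, 0 < P i) (hPsum : ∑ i, P i = 1)
    (hPtype : ∀ i, ∃ m : ℕ, P i = m / n) :
    ∃ m : ι → ℕ, (∀ i, (m i : ℝ) = n * P i) ∧ (∀ i, m i ≠ 0) ∧ ∑ i, m i = n := by
  choose m hm using hPtype
  have hmP : ∀ i, (m i : ℝ) = n * P i := fun i ↦ by rw [hm i]; field_simp
  refine ⟨m, hmP, fun i h ↦ (hP i).ne' (by rw [hm i, h, Nat.cast_zero, zero_div]), ?_⟩
  have : ((∑ i, m i : ℕ) : ℝ) = n := by push_cast; simp [hmP, ← mul_sum, hPsum]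
  exact_mod_cast this

lemma two_rpow_mul_neg_sum_mul_logb (hP : ∀ i, 0 < P i) (hm : ∀ i, (m i : ℝ) = n * P i) :
    (2 : ℝ) ^ ((n : ℝ) * -∑ i, P i * logb 2 (P i)) = (∏ i, P i ^ m i)⁻¹ := by
  have hexp : (n : ℝ) * -∑ i, P i * logb 2 (P i) = ∑ i, logb 2 (P i) * -(m i : ℝ) := by
    simp only [hm, mul_sum, ← sum_neg_distrib]
    exact sum_congr rfl fun i _ ↦ by ring
  rw [hexp, rpow_sum_of_pos two_pos, ← prod_inv_distrib]
  refine prod_congr rfl fun i _ ↦ ?_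
  rw [rpow_mul zero_le_two, rpow_logb two_pos (by norm_num) (hP i), rpow_neg (hP i).le,
    rpow_natCast]

lemma div_exp_pow_div_prod (hn : n ≠ 0) (hm : ∀ i, (m i : ℝ) = n * P i) (hsum : ∑ i, m i = n) :
    (n / exp 1) ^ n / ∏ i, (m i / exp 1) ^ m i = (∏ i, P i ^ m i)⁻¹ := by
  have hprod : ∏ i, ((m i : ℝ) / exp 1) ^ m i = (n / exp 1) ^ n * ∏ i, P i ^ m i := by
    simp only [hm, mul_div_right_comm (n : ℝ), mul_pow, prod_mul_distrib, prod_pow_eq_pow_sum,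
      hsum]
  have : ((n : ℝ) / exp 1) ^ n ≠ 0 := by positivity
  rw [hprod, div_mul_eq_div_div, div_self this, one_div]

lemma sqrt_two_mul_div_prod (hn : n ≠ 0) (hP : ∀ i, 0 < P i) (hm : ∀ i, (m i : ℝ) = n * P i) :
    √(2 * n) / ∏ i, √(2 * m i) = (2 : ℝ) ^ ((1 - Fintype.card ι : ℝ) / 2) /
      (n : ℝ) ^ ((Fintype.card ι - 1 : ℝ) / 2) * ∏ i, P i ^ (-(1 / 2) : ℝ) := by
  have h2n : (0 : ℝ) < 2 * n := by positivity
  have hprod : ∏ i, √(2 * (m i : ℝ)) = (2 * n) ^ (Fintype.card ι / 2 : ℝ) * ∏ i, √(P i) := by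
    simp only [hm, ← mul_assoc, sqrt_mul h2n.le, prod_mul_distrib, prod_const, Finset.card_univ,
      sqrt_eq_rpow, ← rpow_natCast, ← rpow_mul h2n.le]
    ring_nf
  have hsqrt : ∏ i, P i ^ (-(1 / 2) : ℝ) = (∏ i, √(P i))⁻¹ := by
    rw [← prod_inv_distrib]
    exact prod_congr rfl fun i _ ↦ by rw [rpow_neg (hP i).le, sqrt_eq_rpow]
  have hnpos : (0 : ℝ) < n := by positivity
  rw [hprod, hsqrt, sqrt_eq_rpow, div_mul_eq_div_div, ← rpow_sub h2n,
    mul_rpow zero_le_two hnpos.le, div_eq_mul_inv _ ((n : ℝ) ^ _), ← rpow_neg hnpos.le,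
    div_eq_mul_inv]
  ring_nf

lemma stirlingApprox_div_prod (hn : n ≠ 0) (hP : ∀ i, 0 < P i)
    (hm : ∀ i, (m i : ℝ) = n * P i) (hsum : ∑ i, m i = n) :
    stirlingApprox n / ∏ i, stirlingApprox (m i) = (2 : ℝ) ^ ((1 - Fintype.card ι : ℝ) / 2) *
      ((2 : ℝ) ^ ((n : ℝ) * -∑ i, P i * logb 2 (P i)) /
        (n : ℝ) ^ ((Fintype.card ι - 1 : ℝ) / 2) * ∏ i, P i ^ (-(1 / 2) : ℝ)) := by
  rw [stirlingApprox, prod_congr rfl fun i _ ↦ stirlingApprox.eq_1 (m i), prod_mul_distrib,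
    ← _root_.div_mul_div_comm, sqrt_two_mul_div_prod hn hP hm, div_exp_pow_div_prod hn hm hsum,
    two_rpow_mul_neg_sum_mul_logb hP hm]
  ring

end TypeClass

theorem type_class_size_general (k : ℕ) :
    ∃ c C : ℝ, 0 < c ∧ 0 < C ∧
      ∀ (n : ℕ), 0 < n → ∀ P : Fin k → ℝ,
        (∀ a, 0 < P a) → (∑ a, P a = 1) →
        (∀ a, ∃ m : ℕ, (P a : ℝ) = (m : ℝ) / n) →
        (c * ((2 : ℝ) ^ ((n : ℝ) * (-∑ a, P a * Real.logb 2 (P a))) /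
              (n : ℝ) ^ (((k : ℝ) - 1) / 2) * ∏ a, (P a) ^ (-(1/2) : ℝ))
            ≤ ((univ.filter (fun x : Fin n → Fin k =>
                ∀ a, ((univ.filter (fun i => x i = a)).card : ℝ) = n * P a)).card : ℝ)) ∧
        (((univ.filter (fun x : Fin n → Fin k =>
              ∀ a, ((univ.filter (fun i => x i = a)).card : ℝ) = n * P a)).card : ℝ)
            ≤ C * ((2 : ℝ) ^ ((n : ℝ) * (-∑ a, P a * Real.logb 2 (P a))) /
              (n : ℝ) ^ (((k : ℝ) - 1) / 2) * ∏ a, (P a) ^ (-(1/2) : ℝ))) := by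
  have hs₁ : 0 < stirlingSeq 1 := stirlingSeq_pos one_ne_zero
  refine ⟨√π / stirlingSeq 1 ^ k * 2 ^ ((1 - k : ℝ) / 2),
    stirlingSeq 1 / √π ^ k * 2 ^ ((1 - k : ℝ) / 2), by positivity, by positivity, ?_⟩
  intro n hn P hP hPsum hPtype
  obtain ⟨m, hmP, hm0, hsum⟩ := exists_counts_of_type hn.ne' hP hPsum hPtype
  have hcard : #{x : Fin n → Fin k | ∀ a, (#{i | x i = a} : ℝ) = n * P a} =
      Nat.multinomial univ m := by
    rw [← card_filter_card_fiber_eq (by rw [hsum, Fintype.card_fin])]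
    congr 1
    ext x
    simp only [mem_filter, mem_univ, true_and, ← hmP, Nat.cast_inj]
  have hstirling := multinomial_eq_stirlingSeq_mul_stirlingApprox hm0 hn.ne' hsum
  have hlower := sqrt_pi_div_le_stirlingSeq_div_prod hm0 hn.ne'
  have hupper := stirlingSeq_div_prod_le hm0 hn.ne'
  rw [stirlingApprox_div_prod hn.ne' hP hmP hsum] at hstirling
  simp only [Fintype.card_fin] at hstirling hlower hupper
  have hmain : 0 ≤ (2 : ℝ) ^ ((1 - k : ℝ) / 2) * ((2 : ℝ) ^ ((n : ℝ) * -∑ a, P a * logb 2 (P a)) /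
      (n : ℝ) ^ ((k - 1 : ℝ) / 2) * ∏ a, P a ^ (-(1 / 2) : ℝ)) :=
    mul_nonneg (by positivity) (mul_nonneg (by positivity)
      (prod_nonneg fun a _ ↦ rpow_nonneg (hP a).le _))
  rw [hcard, hstirling, mul_assoc, mul_assoc]
  exact ⟨mul_le_mul_of_nonneg_right hlower hmain, mul_le_mul_of_nonneg_right hupper hmain⟩

/-- Size of type classes: for an `n`-type `P` with full support on an alphabet of
size `k`, `|T(P)| ≍_k 2^{nH(P)} n^{-(k-1)/2} ∏_a P(a)^{-1/2}`, with constants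
depending only on `k`. -/
theorem type_class_size (k : ℕ) (hk : 0 < k) :
    ∃ c C : ℝ, 0 < c ∧ 0 < C ∧
      ∀ (n : ℕ), 0 < n → ∀ P : Fin k → ℝ,
        (∀ a, 0 < P a) → (∑ a, P a = 1) →
        (∀ a, ∃ m : ℕ, (P a : ℝ) = (m : ℝ) / n) →
        (c * ((2 : ℝ) ^ ((n : ℝ) * (-∑ a, P a * Real.logb 2 (P a))) /
              (n : ℝ) ^ (((k : ℝ) - 1) / 2) * ∏ a, (P a) ^ (-(1/2) : ℝ))
            ≤ ((univ.filter (fun x : Fin n → Fin k =>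
                ∀ a, ((univ.filter (fun i => x i = a)).card : ℝ) = n * P a)).card : ℝ)) ∧
        (((univ.filter (fun x : Fin n → Fin k =>
              ∀ a, ((univ.filter (fun i => x i = a)).card : ℝ) = n * P a)).card : ℝ)
            ≤ C * ((2 : ℝ) ^ ((n : ℝ) * (-∑ a, P a * Real.logb 2 (P a))) /
              (n : ℝ) ^ (((k : ℝ) - 1) / 2) * ∏ a, (P a) ^ (-(1/2) : ℝ))) :=
  type_class_size_general k
end
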